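/- arXiv:1701.06669 — 13 statements merged into one kernel-verified Lean document; each statement's English description precedes it below -/
import Mathlib

section
/- For a graph G, if g : V(G) → {1, ..., k} is a proper vertex coloring, and f is defined by f(v) = 1 if g(v) = 1 and f(v) = p_{g(v)-1} (the (g(v)-1)-th prime) otherwise, then f is a vertex-labeling by product, i.e., c(v) = ∏_{u ∼ v} f(u) is a proper vertex coloring of G. -/
/-- Key lemma: if `u ~ v` and `g v ≠ 1`, then the prime `p_{g v - 2}` divides the
product over the neighbors of `u` but not the product over the neighbors of `v`. -/
theorem vlp_aux
    {V : Type*} [Fintype V] (G : SimpleGraph V) [DecidableRel G.Adj]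
    (g : V → ℕ) (hg : ∀ v, 1 ≤ g v)
    (hproper : ∀ u v, G.Adj u v → g u ≠ g v)
    (f : V → ℕ)
    (hf : ∀ v, f v = if g v = 1 then 1 else Nat.nth Nat.Prime (g v - 2))
    (u v : V) (huv : G.Adj u v) (hv1 : g v ≠ 1) :
    ∏ w ∈ G.neighborFinset u, f w ≠ ∏ w ∈ G.neighborFinset v, f w := by
  set q := Nat.nth Nat.Prime (g v - 2) with hq
  have hqp : q.Prime := Nat.nth_mem_of_infinite Nat.infinite_setOf_prime _
  have hdvd : q ∣ ∏ w ∈ G.neighborFinset u, f w := by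
    have hv : v ∈ G.neighborFinset u := by
      simpa [SimpleGraph.mem_neighborFinset] using huv
    have : f v = q := by rw [hf v, if_neg hv1]
    exact this ▸ Finset.dvd_prod_of_mem f hv
  have hndvd : ¬ q ∣ ∏ w ∈ G.neighborFinset v, f w := by
    intro h
    obtain ⟨w, hw, hwd⟩ := hqp.prime.exists_mem_finset_dvd h
    rw [SimpleGraph.mem_neighborFinset] at hw
    have hne : g w ≠ g v := (hproper v w hw).symm
    rw [hf w] at hwd
    by_cases hw1 : g w = 1
    · rw [if_pos hw1] at hwd
      exact hqp.ne_one (Nat.dvd_one.mp hwd)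
    · rw [if_neg hw1] at hwd
      have hp' : (Nat.nth Nat.Prime (g w - 2)).Prime :=
        Nat.nth_mem_of_infinite Nat.infinite_setOf_prime _
      have := (Nat.prime_dvd_prime_iff_eq hqp hp').mp hwd
      have : g v - 2 = g w - 2 := Nat.nth_injective Nat.infinite_setOf_prime this
      have h1 := hg v; have h2 := hg w
      omega
  intro h
  exact hndvd (h ▸ hdvd)

/-- If `g : V → {1,...,k}` is a proper vertex coloring and `f v = 1` when `g v = 1`,
`f v = p_{g v - 1}` (the `(g v - 1)`-th prime, `p_1 = 2`) otherwise, then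
`c v = ∏_{u ~ v} f u` is a proper vertex coloring, i.e. `f` is a vertex-labeling
by product. -/
theorem vertex_labeling_by_product_of_primes
    {V : Type*} [Fintype V] (G : SimpleGraph V) [DecidableRel G.Adj]
    (k : ℕ) (g : V → ℕ) (hg : ∀ v, g v ∈ Finset.Icc 1 k)
    (hproper : ∀ u v, G.Adj u v → g u ≠ g v)
    (f : V → ℕ)
    (hf : ∀ v, f v = if g v = 1 then 1 else Nat.nth Nat.Prime (g v - 2)) :
    ∀ u v, G.Adj u v →
      ∏ w ∈ G.neighborFinset u, f w ≠ ∏ w ∈ G.neighborFinset v, f w := by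
  intro u v huv
  have hg1 : ∀ w, 1 ≤ g w := fun w => (Finset.mem_Icc.mp (hg w)).1
  by_cases hv1 : g v = 1
  · have hu1 : g u ≠ 1 := fun h => hproper u v huv (h.trans hv1.symm)
    exact (vlp_aux G g hg1 hproper f hf v u huv.symm hu1).symm
  · exact vlp_aux G g hg1 hproper f hf u v huv hv1
end

section
/- Every bipartite graph has a vertex-labeling by product using only labels from {1, 2}. -/
/-- Every bipartite (i.e. 2-colorable) graph has a vertex-labeling by product
using only labels from `{1, 2}`. -/
theorem bipartite_vertex_labeling_by_product
    {V : Type*} [Fintype V] (G : SimpleGraph V) [DecidableRel G.Adj]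
    (hbip : G.Colorable 2) :
    ∃ f : V → ℕ, (∀ v, f v ∈ ({1, 2} : Finset ℕ)) ∧
      ∀ u v, G.Adj u v →
        ∏ w ∈ G.neighborFinset u, f w ≠ ∏ w ∈ G.neighborFinset v, f w := by
  obtain ⟨C⟩ := hbip
  refine ⟨fun v => if C v = 0 then 1 else 2, fun v => ?_, ?_⟩
  · by_cases h : C v = 0 <;> simp [h]
  · -- key: product at u is (if C u = 0 then 2 else 1) ^ deg u
    have key : ∀ u : V, (∏ w ∈ G.neighborFinset u, (if C w = 0 then 1 else 2))
        = (if C u = 0 then 2 else 1) ^ (G.neighborFinset u).card := by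
      intro u
      rw [← Finset.prod_const]
      refine Finset.prod_congr rfl fun w hw => ?_
      rw [SimpleGraph.mem_neighborFinset] at hw
      have hne : C w ≠ C u := C.valid hw.symm
      by_cases h : C u = 0
      · have : C w = 1 := by omega
        simp [h, this]
      · have : C u = 1 := by omega
        have hw0 : C w = 0 := by omega
        simp [h, hw0]
    intro u v huv
    rw [key, key]
    have hdu : 0 < (G.neighborFinset u).card := by
      rw [Finset.card_pos]
      exact ⟨v, by rw [SimpleGraph.mem_neighborFinset]; exact huv⟩
    have hdv : 0 < (G.neighborFinset v).card := by
      rw [Finset.card_pos]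
      exact ⟨u, by rw [SimpleGraph.mem_neighborFinset]; exact huv.symm⟩
    have hne : C u ≠ C v := C.valid huv
    by_cases h : C u = 0
    · have hv : C v ≠ 0 := fun hv => hne (by rw [h, hv])
      simp only [h, if_pos rfl, if_neg hv, one_pow]
      exact Nat.ne_of_gt (Nat.one_lt_two_pow (by omega))
    · have hv : C v = 0 := by
        have : C u = 1 := by omega
        omega
      simp only [if_neg h, hv, if_pos rfl, one_pow]
      exact Nat.ne_of_lt (Nat.one_lt_two_pow (by omega))
end

section
/- Every 3-colorable graph has a vertex-labeling by product using labels from {1, 2, 3}. -/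
lemma prod_label_ne_aux {V : Type*} [Fintype V] (G : SimpleGraph V) [DecidableRel G.Adj]
    (C : G.Coloring (Fin 3)) (f : V → ℕ) (p : ℕ) (k : Fin 3)
    (hfk : ∀ w, (f w).factorization p = if C w = k then 1 else 0)
    (hfne : ∀ w, f w ≠ 0) {u v : V} (huv : G.Adj u v) (hvk : C v = k) :
    (∏ w ∈ G.neighborFinset u, f w) ≠ ∏ w ∈ G.neighborFinset v, f w := by
  classical
  have key : ∀ x : V, (∏ w ∈ G.neighborFinset x, f w).factorization p
      = ((G.neighborFinset x).filter (fun w => C w = k)).card := by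
    intro x
    rw [Nat.factorization_prod (fun w _ => hfne w)]
    rw [Finsupp.finset_sum_apply]
    simp only [hfk]
    rw [Finset.sum_boole]
    simp
  intro heq
  have h := congrArg (fun n => n.factorization p) heq
  simp only [key] at h
  have hv0 : ((G.neighborFinset v).filter (fun w => C w = k)).card = 0 := by
    rw [Finset.card_eq_zero, Finset.filter_eq_empty_iff]
    intro w hw
    rw [SimpleGraph.mem_neighborFinset] at hw
    have := C.valid hw
    rw [hvk] at this
    exact fun hwk => this hwk.symm
  have hu0 : ((G.neighborFinset u).filter (fun w => C w = k)).card ≠ 0 := by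
    apply Finset.card_ne_zero_of_mem (a := v)
    rw [Finset.mem_filter, SimpleGraph.mem_neighborFinset]
    exact ⟨huv, hvk⟩
  rw [h, hv0] at hu0
  exact hu0 rfl

/-- Every 3-colorable graph has a vertex-labeling by product using labels
from `{1, 2, 3}`. -/
theorem three_colorable_vertex_labeling_by_product
    {V : Type*} [Fintype V] (G : SimpleGraph V) [DecidableRel G.Adj]
    (hcol : G.Colorable 3) :
    ∃ f : V → ℕ, (∀ v, f v ∈ ({1, 2, 3} : Finset ℕ)) ∧
      ∀ u v, G.Adj u v →
        ∏ w ∈ G.neighborFinset u, f w ≠ ∏ w ∈ G.neighborFinset v, f w := by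
  classical
  obtain ⟨C⟩ := hcol
  set f : V → ℕ := fun v => if C v = 1 then 2 else if C v = 2 then 3 else 1 with hf
  have hfne : ∀ w, f w ≠ 0 := by
    intro w; simp only [hf]; split_ifs <;> norm_num
  have h22 : (2:ℕ).factorization 2 = 1 := by
    rw [Nat.Prime.factorization (by norm_num)]; simp
  have h32 : (3:ℕ).factorization 2 = 0 := by
    rw [Nat.Prime.factorization (by norm_num)]; simp
  have h33 : (3:ℕ).factorization 3 = 1 := by
    rw [Nat.Prime.factorization (by norm_num)]; simp
  have h23 : (2:ℕ).factorization 3 = 0 := by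
    rw [Nat.Prime.factorization (by norm_num)]; simp
  have hfk1 : ∀ w, (f w).factorization 2 = if C w = 1 then 1 else 0 := by
    intro w; simp only [hf]; split_ifs <;> simp_all
  have hfk2 : ∀ w, (f w).factorization 3 = if C w = 2 then 1 else 0 := by
    intro w; simp only [hf]; split_ifs <;> simp_all
  refine ⟨f, ?_, ?_⟩
  · intro v; simp only [hf]; split_ifs <;> simp
  · intro u v huv
    have hne : C u ≠ C v := C.valid huv
    have hall : ∀ a b : Fin 3, a ≠ b → (a = 1 ∨ b = 1) ∨ (a = 2 ∨ b = 2) := by decide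
    have hcases := hall (C u) (C v) hne
    rcases hcases with (h | h) | (h | h)
    · exact (prod_label_ne_aux G C f 2 1 hfk1 hfne huv.symm h).symm
    · exact prod_label_ne_aux G C f 2 1 hfk1 hfne huv h
    · exact (prod_label_ne_aux G C f 3 2 hfk2 hfne huv.symm h).symm
    · exact prod_label_ne_aux G C f 3 2 hfk2 hfne huv h
end

section
/- Let G be a 3-regular graph. Then G has a vertex-labeling by product from {1,2} if and only if G has a vertex-labeling by sum from {1,2}. -/
lemma prod_two_pow {V : Type*} (f : V → ℕ) (hf : ∀ v, f v ∈ ({1, 2} : Finset ℕ))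
    (s : Finset V) [DecidableEq V] :
    ∏ w ∈ s, f w = 2 ^ (s.filter (fun w => f w = 2)).card := by
  classical
  induction s using Finset.induction with
  | empty => simp
  | @insert a s ha ih =>
    rw [Finset.prod_insert ha, ih, Finset.filter_insert]
    have := hf a
    simp only [Finset.mem_insert, Finset.mem_singleton] at this
    rcases this with h | h
    · simp [h]
    · rw [if_pos h, Finset.card_insert_of_notMem (by simp [ha]), h, pow_succ]
      ring

lemma sum_card_add {V : Type*} (f : V → ℕ) (hf : ∀ v, f v ∈ ({1, 2} : Finset ℕ))
    (s : Finset V) [DecidableEq V] :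
    ∑ w ∈ s, f w = s.card + (s.filter (fun w => f w = 2)).card := by
  classical
  induction s using Finset.induction with
  | empty => simp
  | @insert a s ha ih =>
    rw [Finset.sum_insert ha, ih, Finset.filter_insert, Finset.card_insert_of_notMem ha]
    have := hf a
    simp only [Finset.mem_insert, Finset.mem_singleton] at this
    rcases this with h | h
    · simp [h]; ring
    · rw [if_pos h, Finset.card_insert_of_notMem (by simp [ha]), h]
      ring

/-- For a 3-regular graph `G`, `G` has a vertex-labeling by product from `{1,2}` iff
`G` has a vertex-labeling by sum from `{1,2}`. -/
theorem cubic_vertex_product_iff_vertex_sum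
    {V : Type*} [Fintype V] (G : SimpleGraph V) [DecidableRel G.Adj]
    (hreg : ∀ v, G.degree v = 3) :
    (∃ f : V → ℕ, (∀ v, f v ∈ ({1, 2} : Finset ℕ)) ∧
      ∀ u v, G.Adj u v →
        ∏ w ∈ G.neighborFinset u, f w ≠ ∏ w ∈ G.neighborFinset v, f w) ↔
    (∃ f : V → ℕ, (∀ v, f v ∈ ({1, 2} : Finset ℕ)) ∧
      ∀ u v, G.Adj u v →
        ∑ w ∈ G.neighborFinset u, f w ≠ ∑ w ∈ G.neighborFinset v, f w) := by
  classical
  have key : ∀ (f : V → ℕ), (∀ v, f v ∈ ({1, 2} : Finset ℕ)) → ∀ u v : V,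
      (∏ w ∈ G.neighborFinset u, f w ≠ ∏ w ∈ G.neighborFinset v, f w ↔
       ∑ w ∈ G.neighborFinset u, f w ≠ ∑ w ∈ G.neighborFinset v, f w) := by
    intro f hf u v
    rw [prod_two_pow f hf, prod_two_pow f hf, sum_card_add f hf, sum_card_add f hf]
    constructor
    · intro h hs
      apply h
      have hc : (G.neighborFinset u).card = (G.neighborFinset v).card := by
        rw [G.card_neighborFinset_eq_degree, G.card_neighborFinset_eq_degree, hreg, hreg]
      have hk : ((G.neighborFinset u).filter (fun w => f w = 2)).card =
          ((G.neighborFinset v).filter (fun w => f w = 2)).card := by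
        rw [hc] at hs
        exact Nat.add_left_cancel hs
      rw [hk]
    · intro h hp
      apply h
      have hc : (G.neighborFinset u).card = (G.neighborFinset v).card := by
        rw [G.card_neighborFinset_eq_degree, G.card_neighborFinset_eq_degree, hreg, hreg]
      have := Nat.pow_right_injective (le_refl 2) hp
      omega
  constructor
  · rintro ⟨f, hf, h⟩
    exact ⟨f, hf, fun u v huv => (key f hf u v).mp (h u v huv)⟩
  · rintro ⟨f, hf, h⟩
    exact ⟨f, hf, fun u v huv => (key f hf u v).mpr (h u v huv)⟩
end

section
/- A graph G has an edge-labeling by gap if and only if G has no connected component isomorphic to K_2 (an isolated edge). In particular, labeling the edges by distinct powers of two yields an edge-labeling by gap for any graph with no K_2 component. -/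
/-!
Label the edges injectively by powers `4 ^ i`. A vertex of degree at least two then gets the
colour `4 ^ a - 4 ^ b` with `b < a`, which lies in `[3 * 4 ^ (a - 1), 4 ^ a)`: it is not a label,
and it determines `a` and `b`. Hence a vertex of degree one never shares its colour with its
neighbour, and two adjacent vertices of degree at least two with the same colour would have the same
heaviest and the same lightest incident edge, both equal to their common edge. Conversely, both
ends of an isolated edge are always coloured by its label.
-/

/-- The induced color of the vertex `v` under an edge-labeling `f`:
`1` if `v` is isolated, the label of the unique incident edge if `deg v = 1`,
and `max_{e ∋ v} f e − min_{e ∋ v} f e` otherwise. -/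
noncomputable def gapEdgeColor {V : Type*} [Fintype V] [DecidableEq V]
    (G : SimpleGraph V) (f : Sym2 V → ℕ) (v : V) : ℕ :=
  letI := Classical.decRel G.Adj
  if G.degree v = 0 then 1
  else if G.degree v = 1 then (G.incidenceFinset v).sup f
  else (G.incidenceFinset v).sup f - sInf (f '' G.incidenceSet v)

open SimpleGraph Finset Function

namespace Nat

theorem pow_sub_pow_bounds {n c k : ℕ} (hn : 1 ≤ n) (hck : c ≤ k) :
    (n - 1) * n ^ k ≤ n ^ (k + 1) - n ^ c ∧ n ^ (k + 1) - n ^ c < n ^ (k + 1) := by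
  have hc : n ^ c ≤ n ^ k := Nat.pow_le_pow_right hn hck
  have hpos : 0 < n ^ c := Nat.pow_pos hn
  have hsucc : n ^ (k + 1) = n * n ^ k := Nat.pow_succ' ..
  have hmul : (n - 1) * n ^ k = n * n ^ k - n ^ k := by rw [Nat.sub_mul, one_mul]
  have hk : n ^ k ≤ n * n ^ k := Nat.le_mul_of_pos_left _ hn
  omega

theorem log_pow_sub_pow {n a c : ℕ} (hn : 2 ≤ n) (hca : c < a) :
    Nat.log n (n ^ a - n ^ c) = a - 1 := by
  obtain ⟨k, rfl⟩ : ∃ k, a = k + 1 := ⟨a - 1, by omega⟩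
  obtain ⟨hlow, hhigh⟩ := pow_sub_pow_bounds (n := n) (by omega) (Nat.le_of_lt_succ hca)
  have : n ^ k ≤ (n - 1) * n ^ k := Nat.le_mul_of_pos_left _ (by omega)
  exact Nat.log_eq_of_pow_le_of_lt_pow (this.trans hlow) hhigh

theorem pow_sub_pow_inj {n a b c d : ℕ} (hn : 2 ≤ n) (hca : c < a) (hdb : d < b)
    (h : n ^ a - n ^ c = n ^ b - n ^ d) : a = b ∧ c = d := by
  have hab : a = b := by
    have := log_pow_sub_pow hn hca
    rw [h, log_pow_sub_pow hn hdb] at this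
    omega
  subst hab
  have hc : n ^ c < n ^ a := Nat.pow_lt_pow_right hn hca
  have hd : n ^ d < n ^ a := Nat.pow_lt_pow_right hn hdb
  exact ⟨rfl, Nat.pow_right_injective hn (show n ^ c = n ^ d by omega)⟩

-- Fails for `n = 2`: `2 ^ (c + 1) - 2 ^ c = 2 ^ c`.
theorem pow_sub_pow_ne_pow {n a c m : ℕ} (hn : 3 ≤ n) (hca : c < a) :
    n ^ a - n ^ c ≠ n ^ m := by
  intro h
  have hm : m = a - 1 := by
    rw [← log_pow_sub_pow (n := n) (by omega) hca, h, Nat.log_pow (by omega)]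
  obtain ⟨k, rfl⟩ : ∃ k, a = k + 1 := ⟨a - 1, by omega⟩
  obtain ⟨hlow, -⟩ := pow_sub_pow_bounds (n := n) (by omega) (Nat.le_of_lt_succ hca)
  have hpos : 0 < n ^ k := Nat.pow_pos (by omega)
  rw [h, hm, Nat.add_sub_cancel] at hlow
  have : 2 * n ^ k ≤ (n - 1) * n ^ k := Nat.mul_le_mul_right _ (by omega)
  omega

end Nat

section GapLabeling

variable {V : Type*} [Fintype V] [DecidableEq V] (G : SimpleGraph V)

def IsGapLabeling (f : Sym2 V → ℕ) : Prop :=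
  ∀ u v, G.Adj u v → gapEdgeColor G f u ≠ gapEdgeColor G f v

variable [DecidableRel G.Adj] (f : Sym2 V → ℕ) {u v : V}

theorem gapEdgeColor_def :
    gapEdgeColor G f v =
      if G.degree v = 0 then 1
      else if G.degree v = 1 then (G.incidenceFinset v).sup f
      else (G.incidenceFinset v).sup f - sInf (f '' G.incidenceSet v) := by
  unfold gapEdgeColor
  congr!

theorem gapEdgeColor_of_degree_eq_one (huv : G.Adj u v) (hu : G.degree u = 1) :
    gapEdgeColor G f u = f s(u, v) := by
  obtain ⟨e, he⟩ := card_eq_one.mp ((G.card_incidenceFinset_eq_degree u).trans hu)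
  have huv_mem : s(u, v) ∈ G.incidenceFinset u :=
    (G.mem_incidenceFinset u _).mpr (G.mk'_mem_incidenceSet_left_iff.mpr huv)
  rw [he, mem_singleton] at huv_mem
  rw [gapEdgeColor_def, if_neg (by omega), if_pos hu, he, sup_singleton, huv_mem]

theorem gapEdgeColor_eq_of_isolated_edge (huv : G.Adj u v) (hu : G.degree u = 1)
    (hv : G.degree v = 1) : gapEdgeColor G f u = gapEdgeColor G f v := by
  rw [gapEdgeColor_of_degree_eq_one G f huv hu, gapEdgeColor_of_degree_eq_one G f huv.symm hv,
    Sym2.eq_swap]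

variable {f}

theorem exists_gapEdgeColor_eq_sub (hf : Injective f) (hv : 2 ≤ G.degree v) :
    ∃ e₁ ∈ G.incidenceSet v, ∃ e₂ ∈ G.incidenceSet v,
      f e₂ < f e₁ ∧ gapEdgeColor G f v = f e₁ - f e₂ := by
  have hcard : 1 < #(G.incidenceFinset v) := by
    rw [card_incidenceFinset_eq_degree]; omega
  obtain ⟨e₁, he₁, hsup⟩ := exists_mem_eq_sup (G.incidenceFinset v) (card_pos.mp (by omega)) f
  have hne : (f '' G.incidenceSet v).Nonempty :=
    ⟨f e₁, e₁, (G.mem_incidenceFinset v e₁).mp he₁, rfl⟩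
  obtain ⟨e₂, he₂, hinf⟩ := Nat.sInf_mem hne
  refine ⟨e₁, (G.mem_incidenceFinset v e₁).mp he₁, e₂, he₂, ?_, ?_⟩
  · obtain ⟨a, ha, b, hb, hab⟩ := one_lt_card.mp hcard
    have hle (e) (he : e ∈ G.incidenceFinset v) : f e₂ ≤ f e ∧ f e ≤ f e₁ :=
      ⟨hinf ▸ Nat.sInf_le ⟨e, (G.mem_incidenceFinset v e).mp he, rfl⟩, hsup ▸ le_sup he⟩
    have := hf.ne hab
    have := hle a ha
    have := hle b hb
    omega
  · rw [gapEdgeColor_def, if_neg (by omega), if_neg (by omega), hsup, hinf]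

theorem isGapLabeling_of_sub_injective (hf : Injective f)
    (hsub_ne : ∀ a b c, f b < f a → f a - f b ≠ f c)
    (hsub_inj : ∀ a b c d, f b < f a → f d < f c → f a - f b = f c - f d → a = c ∧ b = d)
    (hG : ¬∃ u v, G.Adj u v ∧ G.degree u = 1 ∧ G.degree v = 1) :
    IsGapLabeling G f := by
  refine fun u v huv => ?_
  have hu₀ : 0 < G.degree u := G.degree_pos_iff_exists_adj u |>.mpr ⟨v, huv⟩
  have hv₀ : 0 < G.degree v := G.degree_pos_iff_exists_adj v |>.mpr ⟨u, huv.symm⟩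
  by_cases hu : G.degree u = 1 <;> by_cases hv : G.degree v = 1
  · exact absurd ⟨u, v, huv, hu, hv⟩ hG
  · obtain ⟨e₁, -, e₂, -, hlt, hcv⟩ :=
      exists_gapEdgeColor_eq_sub G hf (by omega : 2 ≤ G.degree v)
    rw [gapEdgeColor_of_degree_eq_one G f huv hu, hcv]
    exact (hsub_ne e₁ e₂ _ hlt).symm
  · obtain ⟨e₁, -, e₂, -, hlt, hcu⟩ :=
      exists_gapEdgeColor_eq_sub G hf (by omega : 2 ≤ G.degree u)
    rw [gapEdgeColor_of_degree_eq_one G f huv.symm hv, hcu]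
    exact hsub_ne e₁ e₂ _ hlt
  · obtain ⟨e₁, he₁, e₂, he₂, hlt, hcu⟩ :=
      exists_gapEdgeColor_eq_sub G hf (by omega : 2 ≤ G.degree u)
    obtain ⟨e₁', he₁', e₂', he₂', hlt', hcv⟩ :=
      exists_gapEdgeColor_eq_sub G hf (by omega : 2 ≤ G.degree v)
    rw [hcu, hcv]
    intro h
    obtain ⟨rfl, rfl⟩ := hsub_inj _ _ _ _ hlt hlt' h
    have hcommon := G.incidenceSet_inter_incidenceSet_of_adj huv
    have h₁ : e₁ = s(u, v) := Set.mem_singleton_iff.mp (hcommon ▸ ⟨he₁, he₁'⟩)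
    have h₂ : e₂ = s(u, v) := Set.mem_singleton_iff.mp (hcommon ▸ ⟨he₂, he₂'⟩)
    exact (h₁ ▸ h₂ ▸ hlt).false

theorem isGapLabeling_pow {n : ℕ} (hn : 3 ≤ n) {g : Sym2 V → ℕ} (hg : Injective g)
    (hG : ¬∃ u v, G.Adj u v ∧ G.degree u = 1 ∧ G.degree v = 1) :
    IsGapLabeling G (fun e => n ^ g e) := by
  have hpow_inj : Injective (n ^ · : ℕ → ℕ) := Nat.pow_right_injective (by omega)
  have hpow_lt {a b} : n ^ a < n ^ b ↔ a < b := Nat.pow_lt_pow_iff_right (by omega)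
  refine isGapLabeling_of_sub_injective G (hpow_inj.comp hg) ?_ ?_ hG
  · intro a b c hba
    exact Nat.pow_sub_pow_ne_pow hn (hpow_lt.mp hba)
  · intro a b c d hba hdc h
    obtain ⟨hac, hbd⟩ := Nat.pow_sub_pow_inj (by omega) (hpow_lt.mp hba) (hpow_lt.mp hdc) h
    exact ⟨hg hac, hg hbd⟩

end GapLabeling

/-- A graph has an edge-labeling by gap iff it has no connected component isomorphic
to `K₂`, i.e. no edge both of whose endpoints have degree `1`. -/
theorem edge_labeling_by_gap_iff_no_K2_component
    {V : Type*} [Fintype V] [DecidableEq V] (G : SimpleGraph V) [DecidableRel G.Adj] :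
    (∃ f : Sym2 V → ℕ, ∀ u v, G.Adj u v → gapEdgeColor G f u ≠ gapEdgeColor G f v) ↔
    ¬∃ u v, G.Adj u v ∧ G.degree u = 1 ∧ G.degree v = 1 := by
  constructor
  · rintro ⟨f, hf⟩ ⟨u, v, huv, hu, hv⟩
    exact hf u v huv (gapEdgeColor_eq_of_isolated_edge G f huv hu hv)
  · intro hG
    have hindex : Injective fun e => (Fintype.equivFin (Sym2 V) e : ℕ) :=
      Fin.val_injective.comp (Fintype.equivFin _).injective
    exact ⟨_, isGapLabeling_pow G (by norm_num : 3 ≤ 4) hindex hG⟩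
end

section
/- For every n ≥ 3, the complete graph K_n has an edge-labeling by gap using labels from the set {1, 2, ..., n+1} (that is, from {1, ..., χ(K_n)+1}). -/
/-- The gap edge labeling of `K_n` (on `ℕ` values of vertices). -/
def gapLbl (n a b : ℕ) : ℕ :=
  if min a b = 0 ∧ max a b = 1 then n + 1
  else (n - max a b) + (if min a b = 1 then 1 else 0)

lemma gapLbl_comm (n a b : ℕ) : gapLbl n a b = gapLbl n b a := by
  unfold gapLbl; rw [min_comm, max_comm]

/-- The labeling as a function on `Sym2 (Fin n)`. -/
def gapF (n : ℕ) : Sym2 (Fin n) → ℕ :=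
  Sym2.lift ⟨fun i j => gapLbl n i.1 j.1, fun i j => gapLbl_comm n i.1 j.1⟩

lemma gapF_mk (n : ℕ) (i j : Fin n) : gapF n s(i, j) = gapLbl n i.1 j.1 := rfl

/-- For every `n ≥ 3`, the complete graph `K_n` has an edge-labeling by gap with
labels from `{1, ..., n + 1} = {1, ..., χ(K_n) + 1}`. -/
theorem completeGraph_edge_labeling_by_gap (n : ℕ) (hn : 3 ≤ n) :
    ∃ f : Sym2 (Fin n) → ℕ,
      (∀ e ∈ (⊤ : SimpleGraph (Fin n)).edgeFinset, f e ∈ Finset.Icc 1 (n + 1)) ∧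
      ∀ u v, (⊤ : SimpleGraph (Fin n)).Adj u v →
        gapEdgeColor ⊤ f u ≠ gapEdgeColor ⊤ f v := by
  classical
  refine ⟨gapF n, ?_, ?_⟩
  · intro e he
    induction e using Sym2.ind with
    | _ u v =>
      rw [SimpleGraph.mem_edgeFinset, SimpleGraph.mem_edgeSet] at he
      have huv : u.1 ≠ v.1 := fun h => he.ne (Fin.val_injective h)
      have hu := u.2; have hv := v.2
      rw [gapF_mk, Finset.mem_Icc]
      unfold gapLbl
      split_ifs <;> omega
  · have hmem : ∀ (v : Fin n) (e : Sym2 (Fin n)),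
        e ∈ (⊤ : SimpleGraph (Fin n)).incidenceSet v ↔ ∃ w, w ≠ v ∧ e = s(v, w) := by
      intro v e
      constructor
      · intro he
        induction e using Sym2.ind with
        | _ a b =>
          obtain ⟨hab, hv⟩ := he
          rw [SimpleGraph.mem_edgeSet] at hab
          rw [Sym2.mem_iff] at hv
          rcases hv with rfl | rfl
          · exact ⟨b, fun h => hab.ne h.symm, rfl⟩
          · exact ⟨a, fun h => hab.ne h, Sym2.eq_swap⟩
      · rintro ⟨w, hw, rfl⟩
        exact ⟨by simpa using Ne.symm hw, Sym2.mem_mk_left v w⟩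
    have key : ∀ v : Fin n, gapEdgeColor ⊤ (gapF n) v = n - v.1 := by
      intro v
      have hvlt := v.2
      have hdeg : ∀ (inst : Fintype ((⊤ : SimpleGraph (Fin n)).neighborSet v)),
          @SimpleGraph.degree _ ⊤ v inst = n - 1 := by
        intro inst
        have h := SimpleGraph.complete_graph_degree (V := Fin n) v
        rw [Fintype.card_fin] at h
        convert h using 2
      -- witnesses
      set w₀ : Fin n := if v.1 = 1 then ⟨0, by omega⟩ else ⟨1, by omega⟩ with hw₀def
      have hw₀val : w₀.1 = if v.1 = 1 then 0 else 1 := by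
        rw [hw₀def]; split_ifs <;> simp
      have hw₀ne : w₀ ≠ v := by
        intro h; apply_fun Fin.val at h; rw [hw₀val] at h; split_ifs at h <;> omega
      set w₁ : Fin n := if v.1 = n - 1 then ⟨0, by omega⟩ else ⟨n - 1, by omega⟩ with hw₁def
      have hw₁val : w₁.1 = if v.1 = n - 1 then 0 else n - 1 := by
        rw [hw₁def]; split_ifs <;> simp
      have hw₁ne : w₁ ≠ v := by
        intro h; apply_fun Fin.val at h; rw [hw₁val] at h; split_ifs at h <;> omega
      have hsup : ∀ (inst : Fintype ((⊤ : SimpleGraph (Fin n)).neighborSet v)),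
          (@SimpleGraph.incidenceFinset _ ⊤ v inst _).sup (gapF n)
            = (if v.1 ≤ 1 then n + 1 else n + 1 - v.1) := by
        intro inst
        rw [Subsingleton.elim inst (by infer_instance)]
        apply le_antisymm
        · apply Finset.sup_le
          intro e he
          rw [SimpleGraph.mem_incidenceFinset, hmem] at he
          obtain ⟨w, hwv, rfl⟩ := he
          have hwlt := w.2
          have hne : v.1 ≠ w.1 := fun h => hwv (Fin.val_injective h.symm)
          rw [gapF_mk]
          unfold gapLbl
          split_ifs <;> omega
        · have hm : s(v, w₀) ∈ (⊤ : SimpleGraph (Fin n)).incidenceFinset v := by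
            rw [SimpleGraph.mem_incidenceFinset, hmem]
            exact ⟨w₀, hw₀ne, rfl⟩
          refine le_trans ?_ (Finset.le_sup hm)
          rw [gapF_mk]
          unfold gapLbl
          rw [hw₀val]
          split_ifs <;> omega
      have hinf : sInf (gapF n '' (⊤ : SimpleGraph (Fin n)).incidenceSet v)
          = (if v.1 = 1 then 2 else 1) := by
        have hm : gapF n s(v, w₁) ∈ gapF n '' (⊤ : SimpleGraph (Fin n)).incidenceSet v :=
          Set.mem_image_of_mem _ ((hmem v _).2 ⟨w₁, hw₁ne, rfl⟩)
        apply le_antisymm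
        · refine le_trans (Nat.sInf_le hm) ?_
          rw [gapF_mk]
          unfold gapLbl
          rw [hw₁val]
          split_ifs <;> omega
        · apply le_csInf ⟨_, hm⟩
          rintro b ⟨e, he, rfl⟩
          rw [hmem] at he
          obtain ⟨w, hwv, rfl⟩ := he
          have hwlt := w.2
          have hne : v.1 ≠ w.1 := fun h => hwv (Fin.val_injective h.symm)
          rw [gapF_mk]
          unfold gapLbl
          split_ifs <;> omega
      simp only [gapEdgeColor, hdeg, hsup, hinf]
      have h2 : ¬ (n - 1 = 0) := by omega
      have h1 : ¬ (n - 1 = 1) := by omega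
      rw [if_neg h2, if_neg h1]
      split_ifs <;> omega
    intro u v huv
    have hne : u.1 ≠ v.1 := fun h => huv.ne (Fin.val_injective h)
    have := u.2; have := v.2
    rw [key u, key v]
    omega
end

section
/- Every tree T has a vertex-labeling by gap using labels from {1, 2}. Specifically, fixing any root v and setting f(u) = 1 if dist(u,v) ≡ 0 (mod 4) and f(u) = 2 otherwise, yields a vertex-labeling by gap. -/
/-!
In a tree every neighbour of a vertex is one step closer to or farther from the root, and at most
one is closer. Hence a vertex with at least two neighbours sees only the label `2` when its depth
is even (gap `0`), and when its depth is odd it sees its parent and a child, whose depths differ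
by `2`, so exactly one of them is `≡ 0 (mod 4)` (gap `1`). The gap of a vertex with two or more
neighbours is thus its depth parity, which changes along every edge; a leaf gets the label of its
neighbour, and a leaf whose neighbour is deeper must be the root.
-/

/-- The induced color of the vertex `v` under a vertex-labeling `f`:
`1` if `v` is isolated, the label of the unique neighbor if `deg v = 1`,
and `max_{u ~ v} f u − min_{u ~ v} f u` otherwise. -/
noncomputable def gapVertexColor {V : Type*} [Fintype V]
    (G : SimpleGraph V) (f : V → ℕ) (v : V) : ℕ :=
  letI := Classical.decRel G.Adj
  if G.degree v = 0 then 1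
  else if G.degree v = 1 then (G.neighborFinset v).sup f
  else (G.neighborFinset v).sup f - sInf (f '' G.neighborSet v)

section gap

open SimpleGraph

variable {V : Type*} [Fintype V] {G : SimpleGraph V} {f : V → ℕ} {x : V}

lemma gapVertexColor_of_neighborSet_eq_singleton {u : V} (h : G.neighborSet x = {u}) :
    gapVertexColor G f x = f u := by
  let := Classical.decRel G.Adj
  have hN : G.neighborFinset x = {u} := by
    rw [← Finset.coe_inj, coe_neighborFinset, h, Finset.coe_singleton]
  have hdeg : G.degree x = 1 := by
    rw [← card_neighborFinset_eq_degree, hN, Finset.card_singleton]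
  simp [gapVertexColor, hdeg, hN]

lemma gapVertexColor_of_nontrivial {lo hi : ℕ} (hx : (G.neighborSet x).Nontrivial)
    (hlo : IsLeast (f '' G.neighborSet x) lo) (hhi : IsGreatest (f '' G.neighborSet x) hi) :
    gapVertexColor G f x = hi - lo := by
  let := Classical.decRel G.Adj
  have hdeg : 1 < G.degree x := by
    rw [← card_neighborFinset_eq_degree, ← Set.ncard_coe_finset, coe_neighborFinset]
    exact Set.one_lt_ncard_iff_nontrivial.mpr hx
  have hsup : (G.neighborFinset x).sup f = hi := by
    obtain ⟨u, hu, rfl⟩ := hhi.1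
    refine le_antisymm (Finset.sup_le fun w hw => hhi.2 ⟨w, ?_, rfl⟩) (Finset.le_sup ?_)
    · simpa using hw
    · simpa using hu
  simp only [gapVertexColor, hsup, hlo.csInf_eq]
  rw [if_neg (by omega), if_neg (by omega)]

end gap

namespace SimpleGraph

variable {V : Type*} {G : SimpleGraph V}

lemma IsTree.dist_eq_add_one_or_of_adj (hG : G.IsTree) (r : V) {x y : V} (h : G.Adj x y) :
    G.dist x r = G.dist y r + 1 ∨ G.dist y r = G.dist x r + 1 := by
  simpa only [dist_comm (v := r)] using hG.dist_eq_dist_add_one_of_adj r h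

lemma exists_adj_dist_add_one_eq {x r : V} (hx : G.dist x r ≠ 0) :
    ∃ p, G.Adj x p ∧ G.dist p r + 1 = G.dist x r := by
  obtain ⟨w, hw⟩ := exists_walk_of_dist_ne_zero hx
  cases w with
  | nil => simp at hx
  | cons hp q =>
    refine ⟨_, hp, le_antisymm ?_ ?_⟩
    · rw [← hw, Walk.length_cons]
      exact Nat.succ_le_succ (dist_le q)
    · obtain ⟨q', hq'⟩ := q.reachable.exists_walk_length_eq_dist
      simpa [hq'] using dist_le (Walk.cons hp q')

lemma IsAcyclic.eq_of_adj_of_dist_add_one_eq (hG : G.IsAcyclic) {x r a b : V}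
    (ha : G.Adj x a) (hb : G.Adj x b)
    (hda : G.dist a r + 1 = G.dist x r) (hdb : G.dist b r + 1 = G.dist x r) : a = b := by
  -- A shortest walk to the root through a neighbour one step closer is the unique path.
  have path_through : ∀ c, G.Adj x c → G.dist c r + 1 = G.dist x r →
      ∃ p : G.Path x r, p.1.snd = c := by
    intro c hc hdc
    have hreach : G.Reachable c r :=
      hc.symm.reachable.trans (Reachable.of_dist_ne_zero (by omega))
    obtain ⟨q, hq⟩ := hreach.exists_walk_length_eq_dist
    exact ⟨⟨_, (Walk.cons hc q).isPath_of_length_eq_dist (by simp [hq, hdc])⟩, by simp⟩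
  obtain ⟨pa, rfl⟩ := path_through a ha hda
  obtain ⟨pb, rfl⟩ := path_through b hb hdb
  rw [(hG.subsingleton_path x r).elim pa pb]

variable (r : V)

noncomputable def distModFourLabel (u : V) : ℕ := if G.dist u r % 4 = 0 then 1 else 2

variable {r}

lemma distModFourLabel_mem_Icc (u : V) : G.distModFourLabel r u ∈ Set.Icc 1 2 := by
  unfold distModFourLabel
  split_ifs <;> simp

section gapColor

variable [Fintype V]

lemma IsTree.gapVertexColor_distModFourLabel_of_nontrivial (hG : G.IsTree) {x : V}
    (hx : (G.neighborSet x).Nontrivial) :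
    gapVertexColor G (G.distModFourLabel r) x = G.dist x r % 2 := by
  have lower : ∀ c ∈ G.distModFourLabel r '' G.neighborSet x, 1 ≤ c := by
    rintro _ ⟨u, -, rfl⟩
    exact (distModFourLabel_mem_Icc u).1
  have upper : ∀ c ∈ G.distModFourLabel r '' G.neighborSet x, c ≤ 2 := by
    rintro _ ⟨u, -, rfl⟩
    exact (distModFourLabel_mem_Icc u).2
  rcases Nat.even_or_odd (G.dist x r) with heven | hodd
  · have hall : ∀ u ∈ G.neighborSet x, G.distModFourLabel r u = 2 := by
      intro u hu
      have hdu := hG.dist_eq_add_one_or_of_adj r hu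
      have hpar := Nat.even_iff.mp heven
      rw [distModFourLabel, if_neg (by omega)]
    obtain ⟨u, hu⟩ := hx.nonempty
    rw [gapVertexColor_of_nontrivial hx (lo := 2) (hi := 2) ⟨⟨u, hu, hall u hu⟩, ?_⟩
      ⟨⟨u, hu, hall u hu⟩, upper⟩, Nat.even_iff.mp heven]
    rintro _ ⟨w, hw, rfl⟩
    exact (hall w hw).ge
  · rw [Nat.odd_iff.mp hodd]
    obtain ⟨p, hp, hpd⟩ := exists_adj_dist_add_one_eq (r := r) hodd.pos.ne'
    obtain ⟨c, hc, hcp⟩ := hx.exists_ne p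
    -- `c` is not the unique neighbour closer to the root, so it is one step farther away.
    have hcd : G.dist c r = G.dist x r + 1 := by
      refine (hG.dist_eq_add_one_or_of_adj r hc).resolve_left fun h => hcp ?_
      exact hG.isAcyclic.eq_of_adj_of_dist_add_one_eq hc hp h.symm hpd
    have hlabel : ∀ a b, G.Adj x a → G.Adj x b →
        G.distModFourLabel r a = 1 → G.distModFourLabel r b = 2 →
        gapVertexColor G (G.distModFourLabel r) x = 1 := fun a b ha hb h1 h2 =>
      gapVertexColor_of_nontrivial hx ⟨⟨a, ha, h1⟩, lower⟩ ⟨⟨b, hb, h2⟩, upper⟩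
    have hpar := Nat.odd_iff.mp hodd
    by_cases h4 : G.dist x r % 4 = 1
    · exact hlabel p c hp hc (if_pos (by omega)) (if_neg (by omega))
    · exact hlabel c p hc hp (if_pos (by omega)) (if_neg (by omega))

lemma IsTree.gapVertexColor_distModFourLabel_ne_of_adj (hG : G.IsTree) {x y : V}
    (h : G.Adj x y) (hd : G.dist y r = G.dist x r + 1) :
    gapVertexColor G (G.distModFourLabel r) x ≠ gapVertexColor G (G.distModFourLabel r) y := by
  rcases Set.eq_singleton_or_nontrivial (show y ∈ G.neighborSet x from h) with hxl | hxn
  · have hx0 : G.dist x r = 0 := by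
      by_contra h0
      obtain ⟨p, hp, hpd⟩ := exists_adj_dist_add_one_eq h0
      obtain rfl : p = y := by
        simpa only [hxl, Set.mem_singleton_iff] using show p ∈ G.neighborSet x from hp
      omega
    have hlx : G.distModFourLabel r x = 1 := if_pos (by omega)
    have hly : G.distModFourLabel r y = 2 := if_neg (by omega)
    rw [gapVertexColor_of_neighborSet_eq_singleton hxl, hly]
    rcases Set.eq_singleton_or_nontrivial (show x ∈ G.neighborSet y from h.symm) with hyl | hyn
    · rw [gapVertexColor_of_neighborSet_eq_singleton hyl, hlx]
      decide
    · rw [hG.gapVertexColor_distModFourLabel_of_nontrivial hyn]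
      omega
  · rw [hG.gapVertexColor_distModFourLabel_of_nontrivial hxn]
    rcases Set.eq_singleton_or_nontrivial (show x ∈ G.neighborSet y from h.symm) with hyl | hyn
    · rw [gapVertexColor_of_neighborSet_eq_singleton hyl, distModFourLabel]
      split_ifs <;> omega
    · rw [hG.gapVertexColor_distModFourLabel_of_nontrivial hyn]
      omega

end gapColor

end SimpleGraph

theorem tree_vertex_labeling_by_gap_general
    {V : Type*} [Fintype V] (T : SimpleGraph V)
    (hconn : T.Connected) (hacyc : T.IsAcyclic) (v : V) :
    ∀ x y, T.Adj x y →
      gapVertexColor T (fun u => if T.dist u v % 4 = 0 then 1 else 2) x ≠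
      gapVertexColor T (fun u => if T.dist u v % 4 = 0 then 1 else 2) y := by
  intro x y h
  have hT : T.IsTree := ⟨hconn, hacyc⟩
  rcases hT.dist_eq_add_one_or_of_adj v h with hd | hd
  · exact (hT.gapVertexColor_distModFourLabel_ne_of_adj h.symm hd).symm
  · exact hT.gapVertexColor_distModFourLabel_ne_of_adj h hd

/-- Every tree `T` has a vertex-labeling by gap from `{1, 2}`: fix any vertex `v` and
set `f u = 1` if `dist u v ≡ 0 (mod 4)` and `f u = 2` otherwise. -/
theorem tree_vertex_labeling_by_gap
    {V : Type*} [Fintype V] (T : SimpleGraph V) [DecidableRel T.Adj]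
    (hconn : T.Connected) (hacyc : T.IsAcyclic) (v : V) :
    ∀ x y, T.Adj x y →
      gapVertexColor T (fun u => if T.dist u v % 4 = 0 then 1 else 2) x ≠
      gapVertexColor T (fun u => if T.dist u v % 4 = 0 then 1 else 2) y :=
  tree_vertex_labeling_by_gap_general T hconn hacyc v
end

section
/- Every bipartite graph G = [X, Y] has a vertex-labeling by gap: label every vertex of X by 1 and label the vertices of Y by distinct even numbers. -/
/-- Every bipartite graph `G = [X, Y]` has a vertex-labeling by gap: label every
vertex of `X` by `1` and label the vertices of `Y` by distinct (positive) even
numbers. -/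
theorem bipartite_vertex_labeling_by_gap
    {V : Type*} [Fintype V] (G : SimpleGraph V) [DecidableRel G.Adj]
    (X : Set V) (hbip : ∀ u v, G.Adj u v → (u ∈ X ↔ v ∉ X)) :
    ∃ f : V → ℕ,
      (∀ v ∈ X, f v = 1) ∧
      (∀ v ∉ X, Even (f v) ∧ 0 < f v) ∧
      Set.InjOn f Xᶜ ∧
      ∀ u v, G.Adj u v → gapVertexColor G f u ≠ gapVertexColor G f v := by
  classical
  obtain ⟨e⟩ : Nonempty (V ≃ Fin (Fintype.card V)) := ⟨Fintype.equivFin V⟩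
  set f : V → ℕ := fun v => if v ∈ X then 1 else 2 * ((e v : ℕ) + 1) with hf
  have hfX : ∀ v ∈ X, f v = 1 := by intro v hv; simp [hf, hv]
  have hfY : ∀ v ∉ X, Even (f v) ∧ 2 ≤ f v := by
    intro v hv
    simp only [hf, if_neg hv]
    exact ⟨⟨(e v : ℕ) + 1, by ring⟩, by omega⟩
  -- gap bounds
  have hX2 : ∀ w ∈ X, ∀ z, G.Adj w z → 2 ≤ gapVertexColor G f w := by
    intro w hw z hz
    letI := Classical.decRel G.Adj
    have hdeg : G.degree w ≠ 0 := by
      rw [← Nat.pos_iff_ne_zero, SimpleGraph.degree_pos_iff_exists_adj]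
      exact ⟨z, hz⟩
    unfold gapVertexColor
    rw [if_neg hdeg]
    by_cases h1 : G.degree w = 1
    · rw [if_pos h1]
      obtain ⟨a, ha⟩ := Finset.card_eq_one.mp h1
      have hza : z ∈ G.neighborFinset w := by
        rw [SimpleGraph.mem_neighborFinset]; exact hz
      rw [ha] at hza ⊢
      simp only [Finset.mem_singleton] at hza
      rw [Finset.sup_singleton, ← hza]
      have hzX : z ∉ X := (hbip w z hz).mp hw
      exact (hfY z hzX).2
    · rw [if_neg h1]
      have h2 : 1 < (G.neighborFinset w).card := by
        have := G.degree w; unfold SimpleGraph.degree at hdeg h1; omega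
      obtain ⟨a, ha, b, hb, hab⟩ := Finset.one_lt_card.mp h2
      rw [SimpleGraph.mem_neighborFinset] at ha hb
      have haX : a ∉ X := (hbip w a ha).mp hw
      have hbX : b ∉ X := (hbip w b hb).mp hw
      have hfab : f a ≠ f b := by
        simp only [hf, if_neg haX, if_neg hbX]
        intro h
        exact hab (e.injective (Fin.ext (by omega)))
      obtain ⟨⟨ra, hra⟩, ha2⟩ := hfY a haX
      obtain ⟨⟨rb, hrb⟩, hb2⟩ := hfY b hbX
      have hsupa : f a ≤ (G.neighborFinset w).sup f :=
        Finset.le_sup (by rw [SimpleGraph.mem_neighborFinset]; exact ha)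
      have hsupb : f b ≤ (G.neighborFinset w).sup f :=
        Finset.le_sup (by rw [SimpleGraph.mem_neighborFinset]; exact hb)
      have hinfa : sInf (f '' G.neighborSet w) ≤ f a :=
        Nat.sInf_le ⟨a, ha, rfl⟩
      have hinfb : sInf (f '' G.neighborSet w) ≤ f b :=
        Nat.sInf_le ⟨b, hb, rfl⟩
      omega
  have hY1 : ∀ w, w ∉ X → ∀ z, G.Adj w z → gapVertexColor G f w ≤ 1 := by
    intro w hw z hz
    letI := Classical.decRel G.Adj
    have hdeg : G.degree w ≠ 0 := by
      rw [← Nat.pos_iff_ne_zero, SimpleGraph.degree_pos_iff_exists_adj]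
      exact ⟨z, hz⟩
    have hsup : (G.neighborFinset w).sup f ≤ 1 := by
      apply Finset.sup_le
      intro b hb
      rw [SimpleGraph.mem_neighborFinset] at hb
      have : b ∈ X := by
        by_contra hbX
        exact hw ((hbip w b hb).mpr hbX)
      rw [hfX b this]
    unfold gapVertexColor
    rw [if_neg hdeg]
    by_cases h1 : G.degree w = 1
    · rw [if_pos h1]; exact hsup
    · rw [if_neg h1]; omega
  refine ⟨f, hfX, fun v hv => ⟨(hfY v hv).1, by have := (hfY v hv).2; omega⟩, ?_, ?_⟩
  · intro a ha b hb hab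
    simp only [Set.mem_compl_iff] at ha hb
    simp only [hf, if_neg ha, if_neg hb] at hab
    exact e.injective (Fin.ext (by omega))
  · intro u v huv
    by_cases hu : u ∈ X
    · have hv : v ∉ X := (hbip u v huv).mp hu
      have h1 := hX2 u hu v huv
      have h2 := hY1 v hv u huv.symm
      omega
    · have hv : v ∈ X := by
        by_contra hvX
        exact hu ((hbip u v huv).mpr hvX)
      have h1 := hX2 v hv u huv.symm
      have h2 := hY1 u hu v huv
      omega
end

section
/- If G is a graph in which every vertex lies in some triangle, then G has no vertex-labeling by maximum. -/
/-- If every vertex of a (nonempty) graph `G` lies in a triangle, then `G` has no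
vertex-labeling by maximum, i.e. no labeling `f : V → ℕ` such that
`c v = max_{u ~ v} f u` is a proper vertex coloring. -/
theorem no_vertex_labeling_by_maximum_of_all_triangles
    {V : Type*} [Fintype V] [Nonempty V] (G : SimpleGraph V) [DecidableRel G.Adj]
    (htri : ∀ v : V, ∃ x y, G.Adj v x ∧ G.Adj v y ∧ G.Adj x y) :
    ¬∃ f : V → ℕ, ∀ u v, G.Adj u v →
      (G.neighborFinset u).sup f ≠ (G.neighborFinset v).sup f := by
  rintro ⟨f, hf⟩
  obtain ⟨u, -, hu⟩ := Finset.exists_max_image Finset.univ f ⟨Classical.arbitrary V, Finset.mem_univ _⟩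
  obtain ⟨x, y, hux, huy, hxy⟩ := htri u
  have key : ∀ w : V, G.Adj u w → (G.neighborFinset w).sup f = f u := by
    intro w hw
    apply le_antisymm
    · exact Finset.sup_le fun b _ => hu b (Finset.mem_univ b)
    · exact Finset.le_sup ((G.mem_neighborFinset w u).2 hw.symm)
  exact hf x y hxy (by rw [key x hux, key y huy])
end

section
/- If a graph G contains a triangular-structured set of vertices (TSV), then G has no vertex-labeling by maximum. -/
/-- If a graph `G` contains a triangular-structured set of vertices (TSV) `S`
(a nonempty set such that every `v ∈ S` lies in a triangle inside `G[S]`, and for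
every edge `vu` with `v ∈ S`, `u ∉ S` there is `z ∈ S` adjacent to both), then `G`
has no vertex-labeling by maximum. -/
theorem no_vertex_labeling_by_maximum_of_TSV
    {V : Type*} [Fintype V] (G : SimpleGraph V) [DecidableRel G.Adj]
    (S : Set V) (hS : S.Nonempty)
    (htri : ∀ v ∈ S, ∃ x ∈ S, ∃ y ∈ S, G.Adj v x ∧ G.Adj v y ∧ G.Adj x y)
    (hdom : ∀ v ∈ S, ∀ u ∉ S, G.Adj v u → ∃ z ∈ S, G.Adj z v ∧ G.Adj z u) :
    ¬∃ f : V → ℕ, ∀ u v, G.Adj u v →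
      (G.neighborFinset u).sup f ≠ (G.neighborFinset v).sup f := by
  classical
  rintro ⟨f, hf⟩
  set c : V → ℕ := fun v => (G.neighborFinset v).sup f with hc
  have hT : S.toFinset.Nonempty := Set.toFinset_nonempty.mpr hS
  obtain ⟨v0, hv0T, hmax⟩ := S.toFinset.exists_max_image c hT
  have hv0S : v0 ∈ S := Set.mem_toFinset.mp hv0T
  -- v0 has a neighbor (it lies in a triangle)
  obtain ⟨x0, _, y0, _, hvx0, _, _⟩ := htri v0 hv0S
  have hne : (G.neighborFinset v0).Nonempty :=
    ⟨x0, (SimpleGraph.mem_neighborFinset G v0 x0).mpr hvx0⟩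
  obtain ⟨u0, hu0, hu0eq⟩ := Finset.exists_mem_eq_sup _ hne f
  have hadj : G.Adj v0 u0 := (SimpleGraph.mem_neighborFinset G v0 u0).mp hu0
  have key : ∀ w ∈ S, G.Adj w u0 → c w = c v0 := by
    intro w hw hwu
    have h1 : f u0 ≤ c w :=
      Finset.le_sup ((SimpleGraph.mem_neighborFinset G w u0).mpr hwu)
    have h2 : c w ≤ c v0 := hmax w (Set.mem_toFinset.mpr hw)
    have h0 : c v0 = f u0 := hu0eq
    omega
  by_cases hu0S : u0 ∈ S
  · obtain ⟨x, hxS, y, hyS, hux, huy, hxy⟩ := htri u0 hu0S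
    have hx : c x = c v0 := key x hxS hux.symm
    have hy : c y = c v0 := key y hyS huy.symm
    exact hf x y hxy (hx.trans hy.symm)
  · obtain ⟨z, hzS, hzv, hzu⟩ := hdom v0 hv0S u0 hu0S hadj
    exact hf z v0 hzv (key z hzS hzu)
end

section
/- For every t > 3, the graph G_t with vertex set {a_1, ..., a_t} ∪ {b_1, ..., b_{t-2}} and edge set {a_i a_{i+1} : 1 ≤ i ≤ t−1} ∪ {a_j b_j, b_j a_{j+1} : 1 ≤ j ≤ t−2} satisfies: G_t is 3-colorable, but the minimum k such that G_t has a vertex-labeling by maximum from {1, ..., k} equals t. Hence k − χ(G) can be arbitrarily large. -/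
/-- The graph `G_t`: a path `a_1 ... a_t` (here `Sum.inl` indexed by `Fin t`) together
with, for each `1 ≤ j ≤ t-2`, a vertex `b_j` (here `Sum.inr`) adjacent to `a_j` and
`a_{j+1}`. -/
def pathTrianglesGraph (t : ℕ) : SimpleGraph (Fin t ⊕ Fin (t - 2)) :=
  SimpleGraph.fromRel (fun x y =>
    match x, y with
    | Sum.inl i, Sum.inl j => (i : ℕ) + 1 = (j : ℕ)
    | Sum.inl i, Sum.inr j => (i : ℕ) = (j : ℕ) ∨ (i : ℕ) = (j : ℕ) + 1
    | Sum.inr j, Sum.inl i => (i : ℕ) = (j : ℕ) ∨ (i : ℕ) = (j : ℕ) + 1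
    | Sum.inr _, Sum.inr _ => False)

/-- The induced color of `v` under a vertex-labeling by maximum:
`max_{u ~ v} f u`. -/
noncomputable def maxColor {V : Type*} [Fintype V]
    (G : SimpleGraph V) (f : V → ℕ) (v : V) : ℕ :=
  letI := Classical.decRel G.Adj
  (G.neighborFinset v).sup f

lemma ptg_adj_inl_inl {t : ℕ} {i j : Fin t} :
    (pathTrianglesGraph t).Adj (Sum.inl i) (Sum.inl j) ↔ ((i : ℕ) + 1 = j ∨ (j : ℕ) + 1 = i) := by
  simp only [pathTrianglesGraph, SimpleGraph.fromRel_adj, ne_eq, Sum.inl.injEq]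
  constructor
  · rintro ⟨_, h⟩; exact h
  · intro h
    refine ⟨fun he => ?_, h⟩
    rw [he] at h
    omega

lemma ptg_adj_inl_inr {t : ℕ} {i : Fin t} {q : Fin (t - 2)} :
    (pathTrianglesGraph t).Adj (Sum.inl i) (Sum.inr q) ↔ ((i : ℕ) = q ∨ (i : ℕ) = (q : ℕ) + 1) := by
  simp only [pathTrianglesGraph, SimpleGraph.fromRel_adj, ne_eq, or_self]
  simp

lemma ptg_adj_inr_inl {t : ℕ} {i : Fin t} {q : Fin (t - 2)} :
    (pathTrianglesGraph t).Adj (Sum.inr q) (Sum.inl i) ↔ ((i : ℕ) = q ∨ (i : ℕ) = (q : ℕ) + 1) := by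
  rw [SimpleGraph.adj_comm]; exact ptg_adj_inl_inr

lemma ptg_not_adj_inr_inr {t : ℕ} {p q : Fin (t - 2)} :
    ¬ (pathTrianglesGraph t).Adj (Sum.inr p) (Sum.inr q) := by
  simp [pathTrianglesGraph, SimpleGraph.fromRel_adj]

/-- Classification of neighbours of a path vertex. -/
lemma ptg_nbr_inl {t : ℕ} {i : Fin t} {u : Fin t ⊕ Fin (t - 2)}
    (h : (pathTrianglesGraph t).Adj (Sum.inl i) u) :
    (∃ p : Fin t, u = Sum.inl p ∧ ((p : ℕ) + 1 = i ∨ (i : ℕ) + 1 = p)) ∨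
    (∃ q : Fin (t - 2), u = Sum.inr q ∧ ((i : ℕ) = q ∨ (i : ℕ) = (q : ℕ) + 1)) := by
  rcases u with p | q
  · rw [ptg_adj_inl_inl] at h
    exact Or.inl ⟨p, rfl, h.symm⟩
  · rw [ptg_adj_inl_inr] at h
    exact Or.inr ⟨q, rfl, h⟩

/-- Classification of neighbours of a triangle-top vertex. -/
lemma ptg_nbr_inr {t : ℕ} {q : Fin (t - 2)} {u : Fin t ⊕ Fin (t - 2)}
    (h : (pathTrianglesGraph t).Adj (Sum.inr q) u) :
    ∃ p : Fin t, u = Sum.inl p ∧ ((p : ℕ) = q ∨ (p : ℕ) = (q : ℕ) + 1) := by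
  rcases u with p | q'
  · rw [SimpleGraph.adj_comm, ptg_adj_inl_inr] at h
    exact ⟨p, rfl, h⟩
  · exact absurd h.symm ptg_not_adj_inr_inr

lemma le_maxColor {V : Type*} [Fintype V] {G : SimpleGraph V} (f : V → ℕ) {u v : V}
    (h : G.Adj v u) : f u ≤ maxColor G f v := by
  classical
  unfold maxColor
  exact Finset.le_sup (by simp [SimpleGraph.mem_neighborFinset, h])

lemma maxColor_le {V : Type*} [Fintype V] {G : SimpleGraph V} (f : V → ℕ) {v : V} {x : ℕ}
    (h : ∀ u, G.Adj v u → f u ≤ x) : maxColor G f v ≤ x := by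
  classical
  unfold maxColor
  exact Finset.sup_le fun u hu => h u (by simpa using hu)

lemma exists_maxColor {V : Type*} [Fintype V] {G : SimpleGraph V} (f : V → ℕ) {v u0 : V}
    (h0 : G.Adj v u0) : ∃ u, G.Adj v u ∧ maxColor G f v = f u := by
  classical
  unfold maxColor
  have hne : (G.neighborFinset v).Nonempty := ⟨u0, by simpa using h0⟩
  obtain ⟨u, hu, he⟩ := Finset.exists_mem_eq_sup _ hne f
  exact ⟨u, by simpa using hu, he⟩

/-- `G_t` is 3-colorable. -/
lemma ptg_colorable (t : ℕ) : (pathTrianglesGraph t).Colorable 3 := by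
  refine ⟨SimpleGraph.Coloring.mk
    (fun v => match v with
      | Sum.inl i => ⟨(i : ℕ) % 2, by omega⟩
      | Sum.inr _ => ⟨2, by omega⟩) ?_⟩
  rintro (i | q) (j | p) h
  · rw [ptg_adj_inl_inl] at h
    simp only [ne_eq, Fin.mk.injEq]
    omega
  · simp only [ne_eq, Fin.mk.injEq]
    omega
  · simp only [ne_eq, Fin.mk.injEq]
    omega
  · exact absurd h ptg_not_adj_inr_inr

/-- Key triangle argument: if the maximum color at the path vertex `a_j` of the triangle
`{a_i, a_j, b_q}` is realized by the label of the other path vertex `a_i`, and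
`f (a_j)` is strictly below that color, we get a contradiction. -/
lemma ptg_key {t : ℕ} (f : Fin t ⊕ Fin (t - 2) → ℕ)
    (hcol : ∀ u v, (pathTrianglesGraph t).Adj u v →
      maxColor (pathTrianglesGraph t) f u ≠ maxColor (pathTrianglesGraph t) f v)
    {i j : Fin t} {q : Fin (t - 2)}
    (hiq : (i : ℕ) = q ∨ (i : ℕ) = (q : ℕ) + 1)
    (hjq : (j : ℕ) = q ∨ (j : ℕ) = (q : ℕ) + 1)
    (hne : (i : ℕ) ≠ (j : ℕ))
    (hval : maxColor (pathTrianglesGraph t) f (Sum.inl j) = f (Sum.inl i))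
    (hlt : f (Sum.inl j) < maxColor (pathTrianglesGraph t) f (Sum.inl j)) : False := by
  have hadj_iq : (pathTrianglesGraph t).Adj (Sum.inl i) (Sum.inr q) := ptg_adj_inl_inr.mpr hiq
  have hadj_jq : (pathTrianglesGraph t).Adj (Sum.inl j) (Sum.inr q) := ptg_adj_inl_inr.mpr hjq
  have h1 : maxColor (pathTrianglesGraph t) f (Sum.inl j) ≤
      maxColor (pathTrianglesGraph t) f (Sum.inr q) := by
    rw [hval]; exact le_maxColor f hadj_iq.symm
  obtain ⟨u, hu, hue⟩ := exists_maxColor f hadj_iq.symm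
  obtain ⟨p, rfl, hp⟩ := ptg_nbr_inr hu
  have hpij : p = i ∨ p = j := by
    rcases hiq with hi | hi <;> rcases hjq with hj | hj <;>
      [skip; skip; skip; skip] <;>
    · rcases hp with hp | hp
      · first
        | (left; exact Fin.ext (by omega))
        | (right; exact Fin.ext (by omega))
      · first
        | (left; exact Fin.ext (by omega))
        | (right; exact Fin.ext (by omega))
  rcases hpij with rfl | rfl
  · exact hcol (Sum.inl j) (Sum.inr q) hadj_jq (hval.trans hue.symm)
  · omega

section Lower

variable {t k : ℕ}

/-- The lower bound: any valid labeling by maximum needs a label ≥ t. -/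
lemma ptg_lower (ht : 3 < t) (f : Fin t ⊕ Fin (t - 2) → ℕ)
    (hf1 : ∀ v, 1 ≤ f v) (hfk : ∀ v, f v ≤ k)
    (hcol : ∀ u v, (pathTrianglesGraph t).Adj u v →
      maxColor (pathTrianglesGraph t) f u ≠ maxColor (pathTrianglesGraph t) f v) :
    t ≤ k := by
  have main : ∀ i : ℕ, ∀ _hi1 : 1 ≤ i, i ≤ t - 3 → ∀ (a : Fin t) (b : Fin (t - 2)),
      (a : ℕ) = i → (b : ℕ) = i →
      (i + 2 ≤ maxColor (pathTrianglesGraph t) f (Sum.inl a) ∧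
        maxColor (pathTrianglesGraph t) f (Sum.inl a) ≤ max (f (Sum.inl a)) (f (Sum.inr b))) := by
    intro i hi1
    induction i, hi1 using Nat.le_induction with
    | base =>
      intro h13 a1 b1 hva1 hvb1
      obtain ⟨a0, hva0⟩ : ∃ v : Fin t, (v : ℕ) = 0 := ⟨⟨0, by omega⟩, rfl⟩
      obtain ⟨a2, hva2⟩ : ∃ v : Fin t, (v : ℕ) = 2 := ⟨⟨2, by omega⟩, rfl⟩
      obtain ⟨b0, hvb0⟩ : ∃ v : Fin (t - 2), (v : ℕ) = 0 := ⟨⟨0, by omega⟩, rfl⟩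
      have h01 : (pathTrianglesGraph t).Adj (Sum.inl a0) (Sum.inl a1) :=
        ptg_adj_inl_inl.mpr (by omega)
      have h12 : (pathTrianglesGraph t).Adj (Sum.inl a1) (Sum.inl a2) :=
        ptg_adj_inl_inl.mpr (by omega)
      have ha0b0 : (pathTrianglesGraph t).Adj (Sum.inl a0) (Sum.inr b0) :=
        ptg_adj_inl_inr.mpr (by omega)
      have ha1b0 : (pathTrianglesGraph t).Adj (Sum.inl a1) (Sum.inr b0) :=
        ptg_adj_inl_inr.mpr (by omega)
      have ha1b1 : (pathTrianglesGraph t).Adj (Sum.inl a1) (Sum.inr b1) :=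
        ptg_adj_inl_inr.mpr (by omega)
      have part2 : maxColor (pathTrianglesGraph t) f (Sum.inl a1) ≤
          max (f (Sum.inl a1)) (f (Sum.inr b1)) := by
        by_contra hcon
        push_neg at hcon
        obtain ⟨hx1, hy1⟩ := max_lt_iff.mp hcon
        obtain ⟨u, hu, hue⟩ := exists_maxColor f h12
        rcases ptg_nbr_inl hu with ⟨p, rfl, hp⟩ | ⟨q, rfl, hq⟩
        · -- p has value 0 or 2
          rcases hp with hp0 | hp2
          · exact ptg_key f hcol (i := p) (q := b0) (Or.inl (by omega)) (Or.inr (by omega))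
              (by omega) hue hx1
          · exact ptg_key f hcol (i := p) (q := b1) (Or.inr (by omega)) (Or.inl (by omega))
              (by omega) hue hx1
        · -- q has value 0 or 1
          rcases hq with hq1 | hq0
          · -- q = b1
            have he : q = b1 := Fin.ext (by omega)
            rw [he] at hue
            omega
          · -- q = b0 : maxColor a1 = f b0
            have he : q = b0 := Fin.ext (by omega)
            rw [he] at hue
            have h1 : maxColor (pathTrianglesGraph t) f (Sum.inl a1) ≤
                maxColor (pathTrianglesGraph t) f (Sum.inl a0) := by
              rw [hue]; exact le_maxColor f ha0b0
            obtain ⟨u', hu', hue'⟩ := exists_maxColor f h01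
            rcases ptg_nbr_inl hu' with ⟨p', rfl, hp'⟩ | ⟨q', rfl, hq'⟩
            · -- p' = a1
              have he' : p' = a1 := Fin.ext (by omega)
              rw [he'] at hue'
              omega
            · -- q' = b0
              have he' : q' = b0 := Fin.ext (by omega)
              rw [he'] at hue'
              exact hcol (Sum.inl a0) (Sum.inl a1) h01 (by omega)
      have hfa0 : f (Sum.inl a0) ≤ maxColor (pathTrianglesGraph t) f (Sum.inl a1) :=
        le_maxColor f h01.symm
      have hfb0a1 : f (Sum.inr b0) ≤ maxColor (pathTrianglesGraph t) f (Sum.inl a1) :=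
        le_maxColor f ha1b0
      have hfa1b0 : f (Sum.inl a1) ≤ maxColor (pathTrianglesGraph t) f (Sum.inr b0) :=
        le_maxColor f ha1b0.symm
      have hfa1a0 : f (Sum.inl a1) ≤ maxColor (pathTrianglesGraph t) f (Sum.inl a0) :=
        le_maxColor f h01
      have d1 : maxColor (pathTrianglesGraph t) f (Sum.inl a0) ≠
          maxColor (pathTrianglesGraph t) f (Sum.inl a1) := hcol _ _ h01
      have d2 : maxColor (pathTrianglesGraph t) f (Sum.inl a0) ≠
          maxColor (pathTrianglesGraph t) f (Sum.inr b0) := hcol _ _ ha0b0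
      have d3 : maxColor (pathTrianglesGraph t) f (Sum.inl a1) ≠
          maxColor (pathTrianglesGraph t) f (Sum.inr b0) := hcol _ _ ha1b0
      have part1 : 1 + 2 ≤ maxColor (pathTrianglesGraph t) f (Sum.inl a1) := by
        by_contra hcon
        push_neg at hcon
        obtain ⟨u', hu', hue'⟩ := exists_maxColor f h01
        obtain ⟨u'', hu'', hue''⟩ := exists_maxColor f ha1b0.symm
        have ha0cases : maxColor (pathTrianglesGraph t) f (Sum.inl a0) = f (Sum.inl a1) ∨
            maxColor (pathTrianglesGraph t) f (Sum.inl a0) = f (Sum.inr b0) := by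
          rcases ptg_nbr_inl hu' with ⟨p', rfl, hp'⟩ | ⟨q', rfl, hq'⟩
          · have he' : p' = a1 := Fin.ext (by omega)
            rw [he'] at hue'
            exact Or.inl hue'
          · have he' : q' = b0 := Fin.ext (by omega)
            rw [he'] at hue'
            exact Or.inr hue'
        have hb0cases : maxColor (pathTrianglesGraph t) f (Sum.inr b0) = f (Sum.inl a0) ∨
            maxColor (pathTrianglesGraph t) f (Sum.inr b0) = f (Sum.inl a1) := by
          obtain ⟨p'', rfl, hp''⟩ := ptg_nbr_inr hu''
          rcases hp'' with h0'' | h1''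
          · have he'' : p'' = a0 := Fin.ext (by omega)
            rw [he''] at hue''
            exact Or.inl hue''
          · have he'' : p'' = a1 := Fin.ext (by omega)
            rw [he''] at hue''
            exact Or.inr hue''
        have h1a0 : 1 ≤ f (Sum.inl a0) := hf1 _
        have h1a1 : 1 ≤ f (Sum.inl a1) := hf1 _
        have h1b0 : 1 ≤ f (Sum.inr b0) := hf1 _
        omega
      exact ⟨part1, part2⟩
    | succ n hn ih =>
      intro hn3 an1 bn1 hvan1 hvbn1
      obtain ⟨an, hvan⟩ : ∃ v : Fin t, (v : ℕ) = n := ⟨⟨n, by omega⟩, rfl⟩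
      obtain ⟨an2, hvan2⟩ : ∃ v : Fin t, (v : ℕ) = n + 2 := ⟨⟨n + 2, by omega⟩, rfl⟩
      obtain ⟨bn, hvbn⟩ : ∃ v : Fin (t - 2), (v : ℕ) = n := ⟨⟨n, by omega⟩, rfl⟩
      obtain ⟨ih1, ih2⟩ := ih (by omega) an bn hvan hvbn
      have hnn1 : (pathTrianglesGraph t).Adj (Sum.inl an) (Sum.inl an1) :=
        ptg_adj_inl_inl.mpr (by omega)
      have hanbn : (pathTrianglesGraph t).Adj (Sum.inl an) (Sum.inr bn) :=
        ptg_adj_inl_inr.mpr (by omega)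
      have han1bn : (pathTrianglesGraph t).Adj (Sum.inl an1) (Sum.inr bn) :=
        ptg_adj_inl_inr.mpr (by omega)
      have han1bn1 : (pathTrianglesGraph t).Adj (Sum.inl an1) (Sum.inr bn1) :=
        ptg_adj_inl_inr.mpr (by omega)
      have hfan : f (Sum.inl an) ≤ maxColor (pathTrianglesGraph t) f (Sum.inl an1) :=
        le_maxColor f hnn1.symm
      have hfbn : f (Sum.inr bn) ≤ maxColor (pathTrianglesGraph t) f (Sum.inl an1) :=
        le_maxColor f han1bn
      have hd : maxColor (pathTrianglesGraph t) f (Sum.inl an) ≠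
          maxColor (pathTrianglesGraph t) f (Sum.inl an1) := hcol _ _ hnn1
      have h2 : maxColor (pathTrianglesGraph t) f (Sum.inl an) ≤
          maxColor (pathTrianglesGraph t) f (Sum.inl an1) := le_trans ih2 (by omega)
      have part1 : n + 1 + 2 ≤ maxColor (pathTrianglesGraph t) f (Sum.inl an1) := by omega
      have part2 : maxColor (pathTrianglesGraph t) f (Sum.inl an1) ≤
          max (f (Sum.inl an1)) (f (Sum.inr bn1)) := by
        by_contra hcon
        push_neg at hcon
        obtain ⟨hx1, hy1⟩ := max_lt_iff.mp hcon
        obtain ⟨u, hu, hue⟩ := exists_maxColor f hnn1.symm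
        rcases ptg_nbr_inl hu with ⟨p, rfl, hp⟩ | ⟨q, rfl, hq⟩
        · rcases hp with hpn | hpn2
          · -- p = an (value n) : triangle (an, an1, bn)
            exact ptg_key f hcol (i := p) (q := bn) (Or.inl (by omega)) (Or.inr (by omega))
              (by omega) hue hx1
          · -- p = an2 (value n+2) : triangle (an1, an2, bn1)
            exact ptg_key f hcol (i := p) (q := bn1) (Or.inr (by omega)) (Or.inl (by omega))
              (by omega) hue hx1
        · rcases hq with hqn1 | hqn
          · -- q = bn1
            have he : q = bn1 := Fin.ext (by omega)
            rw [he] at hue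
            omega
          · -- q = bn : maxColor an1 = f bn
            have he : q = bn := Fin.ext (by omega)
            rw [he] at hue
            have h3 : f (Sum.inr bn) ≤ maxColor (pathTrianglesGraph t) f (Sum.inl an) :=
              le_maxColor f hanbn
            omega
      exact ⟨part1, part2⟩
  obtain ⟨am3, hvam3⟩ : ∃ v : Fin t, (v : ℕ) = t - 3 := ⟨⟨t - 3, by omega⟩, rfl⟩
  obtain ⟨am2, hvam2⟩ : ∃ v : Fin t, (v : ℕ) = t - 2 := ⟨⟨t - 2, by omega⟩, rfl⟩
  obtain ⟨bm, hvbm⟩ : ∃ v : Fin (t - 2), (v : ℕ) = t - 3 := ⟨⟨t - 3, by omega⟩, rfl⟩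
  obtain ⟨m1, m2⟩ := main (t - 3) (by omega) (by omega) am3 bm hvam3 hvbm
  have hadj1 : (pathTrianglesGraph t).Adj (Sum.inl am3) (Sum.inl am2) :=
    ptg_adj_inl_inl.mpr (by omega)
  have hadj2 : (pathTrianglesGraph t).Adj (Sum.inl am2) (Sum.inr bm) :=
    ptg_adj_inl_inr.mpr (by omega)
  have h1 : f (Sum.inl am3) ≤ maxColor (pathTrianglesGraph t) f (Sum.inl am2) :=
    le_maxColor f hadj1.symm
  have h2 : f (Sum.inr bm) ≤ maxColor (pathTrianglesGraph t) f (Sum.inl am2) :=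
    le_maxColor f hadj2
  have h4 : maxColor (pathTrianglesGraph t) f (Sum.inl am3) ≠
      maxColor (pathTrianglesGraph t) f (Sum.inl am2) := hcol _ _ hadj1
  have h5 : t ≤ maxColor (pathTrianglesGraph t) f (Sum.inl am2) := by omega
  obtain ⟨u, _, hue⟩ := exists_maxColor f hadj1.symm
  have := hfk u
  omega

end Lower

section Membership

variable {t : ℕ}

/-- The witness labeling: `f(a_i) = 1` except `f(a_{t-1}) = t`, and `f(b_j) = j + 2`. -/
private def ptgWitness (t : ℕ) : Fin t ⊕ Fin (t - 2) → ℕ :=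
  Sum.elim (fun i => if (i : ℕ) = t - 1 then t else 1) (fun j => (j : ℕ) + 2)

lemma ptgWitness_inl (i : Fin t) :
    ptgWitness t (Sum.inl i) = if (i : ℕ) = t - 1 then t else 1 := rfl

lemma ptgWitness_inr (j : Fin (t - 2)) : ptgWitness t (Sum.inr j) = (j : ℕ) + 2 := rfl

lemma ptgWitness_maxColor_inr (ht : 3 < t) (q : Fin (t - 2)) :
    maxColor (pathTrianglesGraph t) (ptgWitness t) (Sum.inr q) = 1 := by
  have hq := q.isLt
  apply le_antisymm
  · apply maxColor_le
    intro u hu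
    obtain ⟨p, rfl, hp⟩ := ptg_nbr_inr hu
    have hp2 := p.isLt
    rw [ptgWitness_inl, if_neg (by omega)]
  · obtain ⟨p, hvp⟩ : ∃ v : Fin t, (v : ℕ) = (q : ℕ) := ⟨⟨(q : ℕ), by omega⟩, rfl⟩
    have hadj : (pathTrianglesGraph t).Adj (Sum.inr q) (Sum.inl p) :=
      ptg_adj_inr_inl.mpr (Or.inl hvp)
    have := le_maxColor (ptgWitness t) hadj
    rw [ptgWitness_inl, if_neg (by omega)] at this
    exact this

lemma ptgWitness_maxColor_inl (ht : 3 < t) (i : Fin t) :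
    maxColor (pathTrianglesGraph t) (ptgWitness t) (Sum.inl i) =
      if (i : ℕ) = t - 1 then 1 else if (i : ℕ) = t - 2 then t else (i : ℕ) + 2 := by
  have hi := i.isLt
  by_cases h1 : (i : ℕ) = t - 1
  · rw [if_pos h1]
    apply le_antisymm
    · apply maxColor_le
      intro u hu
      rcases ptg_nbr_inl hu with ⟨p, rfl, hp⟩ | ⟨q, rfl, hq⟩
      · have hp2 := p.isLt
        rw [ptgWitness_inl, if_neg (by omega)]
      · have hq2 := q.isLt
        rw [ptgWitness_inr]
        omega
    · obtain ⟨p, hvp⟩ : ∃ v : Fin t, (v : ℕ) = t - 2 := ⟨⟨t - 2, by omega⟩, rfl⟩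
      have hadj : (pathTrianglesGraph t).Adj (Sum.inl i) (Sum.inl p) :=
        ptg_adj_inl_inl.mpr (by omega)
      have := le_maxColor (ptgWitness t) hadj
      rw [ptgWitness_inl, if_neg (by omega)] at this
      exact this
  · rw [if_neg h1]
    by_cases h2 : (i : ℕ) = t - 2
    · rw [if_pos h2]
      apply le_antisymm
      · apply maxColor_le
        intro u hu
        rcases ptg_nbr_inl hu with ⟨p, rfl, hp⟩ | ⟨q, rfl, hq⟩
        · rw [ptgWitness_inl]
          split_ifs <;> omega
        · have hq2 := q.isLt
          rw [ptgWitness_inr]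
          omega
      · obtain ⟨p, hvp⟩ : ∃ v : Fin t, (v : ℕ) = t - 1 := ⟨⟨t - 1, by omega⟩, rfl⟩
        have hadj : (pathTrianglesGraph t).Adj (Sum.inl i) (Sum.inl p) :=
          ptg_adj_inl_inl.mpr (by omega)
        have := le_maxColor (ptgWitness t) hadj
        rw [ptgWitness_inl, if_pos (by omega)] at this
        exact this
    · rw [if_neg h2]
      apply le_antisymm
      · apply maxColor_le
        intro u hu
        rcases ptg_nbr_inl hu with ⟨p, rfl, hp⟩ | ⟨q, rfl, hq⟩
        · have hp2 := p.isLt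
          rw [ptgWitness_inl]
          split_ifs <;> omega
        · have hq2 := q.isLt
          rw [ptgWitness_inr]
          omega
      · obtain ⟨q, hvq⟩ : ∃ v : Fin (t - 2), (v : ℕ) = (i : ℕ) := ⟨⟨(i : ℕ), by omega⟩, rfl⟩
        have hadj : (pathTrianglesGraph t).Adj (Sum.inl i) (Sum.inr q) :=
          ptg_adj_inl_inr.mpr (Or.inl hvq.symm)
        have := le_maxColor (ptgWitness t) hadj
        rw [ptgWitness_inr, hvq] at this
        exact this

lemma ptg_mem (ht : 3 < t) :
    ∃ f : Fin t ⊕ Fin (t - 2) → ℕ,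
      (∀ v, f v ∈ Finset.Icc 1 t) ∧
      ∀ u v, (pathTrianglesGraph t).Adj u v →
        maxColor (pathTrianglesGraph t) f u ≠ maxColor (pathTrianglesGraph t) f v := by
  refine ⟨ptgWitness t, ?_, ?_⟩
  · intro v
    rw [Finset.mem_Icc]
    rcases v with i | j
    · rw [ptgWitness_inl]
      split_ifs <;> omega
    · have := j.isLt
      rw [ptgWitness_inr]
      omega
  · intro u v huv
    rcases u with i | q <;> rcases v with j | p
    · rw [ptg_adj_inl_inl] at huv
      rw [ptgWitness_maxColor_inl ht, ptgWitness_maxColor_inl ht]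
      have := i.isLt
      have := j.isLt
      split_ifs <;> omega
    · rw [ptg_adj_inl_inr] at huv
      rw [ptgWitness_maxColor_inl ht, ptgWitness_maxColor_inr ht]
      have := i.isLt
      have := p.isLt
      split_ifs <;> omega
    · rw [ptg_adj_inr_inl] at huv
      rw [ptgWitness_maxColor_inl ht, ptgWitness_maxColor_inr ht]
      have := j.isLt
      have := q.isLt
      split_ifs <;> omega
    · exact absurd huv ptg_not_adj_inr_inr

end Membership

/-- For every `t > 3`, the graph `G_t` is 3-colorable, but the minimum `k` such that
`G_t` has a vertex-labeling by maximum from `{1, ..., k}` equals `t`; hence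
`k − χ(G)` can be arbitrarily large. -/
theorem pathTrianglesGraph_colorable_and_least_max_labeling (t : ℕ) (ht : 3 < t) :
    (pathTrianglesGraph t).Colorable 3 ∧
    IsLeast {k : ℕ | ∃ f : Fin t ⊕ Fin (t - 2) → ℕ,
      (∀ v, f v ∈ Finset.Icc 1 k) ∧
      ∀ u v, (pathTrianglesGraph t).Adj u v →
        maxColor (pathTrianglesGraph t) f u ≠ maxColor (pathTrianglesGraph t) f v} t := by
  refine ⟨ptg_colorable t, ptg_mem ht, ?_⟩
  rintro k ⟨f, hmem, hcol⟩
  exact ptg_lower ht f (fun v => (Finset.mem_Icc.mp (hmem v)).1)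
    (fun v => (Finset.mem_Icc.mp (hmem v)).2) hcol
end

section
/- Let G = [X, Y] be a connected bipartite graph with minimum degree at least 2, and let f : E(G) → {1,2} be an edge-labeling by gap. Then either every vertex of X has induced color 1 and every vertex of Y has induced color 0, or vice versa, where the induced color of v is max_{e ∋ v} f(e) − min_{e ∋ v} f(e). -/
lemma gapEdgeColor_le_one {V : Type*} [Fintype V] [DecidableEq V]
    (G : SimpleGraph V) [DecidableRel G.Adj]
    (hdeg : ∀ v, 2 ≤ G.degree v)
    (f : Sym2 V → ℕ) (hf : ∀ e ∈ G.edgeFinset, f e ∈ ({1, 2} : Finset ℕ)) (v : V) :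
    gapEdgeColor G f v ≤ 1 := by
  have h := hdeg v
  have heq : gapEdgeColor G f v
      = (G.incidenceFinset v).sup f - sInf (f '' G.incidenceSet v) := by
    unfold gapEdgeColor
    have := Subsingleton.elim (Classical.decRel G.Adj) ‹DecidableRel G.Adj›
    subst this
    rw [if_neg (by omega), if_neg (by omega)]
  have hmem : ∀ e ∈ G.incidenceFinset v, f e ∈ ({1, 2} : Finset ℕ) := by
    intro e he
    exact hf e (by
      rw [SimpleGraph.mem_incidenceFinset] at he
      simpa using he.1)
  have hsup : (G.incidenceFinset v).sup f ≤ 2 := by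
    apply Finset.sup_le
    intro e he
    have := hmem e he
    simp at this; omega
  have hne : (f '' G.incidenceSet v).Nonempty := by
    have : (G.incidenceFinset v).Nonempty := by
      rw [← Finset.card_pos, G.card_incidenceFinset_eq_degree]; omega
    obtain ⟨e, he⟩ := this
    exact ⟨f e, ⟨e, by rwa [← SimpleGraph.mem_incidenceFinset], rfl⟩⟩
  have hinf : 1 ≤ sInf (f '' G.incidenceSet v) := by
    have hm := Nat.sInf_mem hne
    obtain ⟨e, he, heq'⟩ := hm
    have := hf e (by simpa using he.1)
    simp at this; omega
  rw [heq]; omega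

/-- Let `G = [X, Y]` be a connected bipartite graph with minimum degree at least 2 and
let `f : E(G) → {1,2}` be an edge-labeling by gap. Then either every vertex of `X`
has induced color `1` and every vertex of `Y` has induced color `0`, or vice versa. -/
theorem gap_edge_labeling_colors_on_bipartition
    {V : Type*} [Fintype V] [DecidableEq V] (G : SimpleGraph V) [DecidableRel G.Adj]
    (hconn : G.Connected) (X : Set V)
    (hbip : ∀ u v, G.Adj u v → (u ∈ X ↔ v ∉ X))
    (hdeg : ∀ v, 2 ≤ G.degree v)
    (f : Sym2 V → ℕ) (hf : ∀ e ∈ G.edgeFinset, f e ∈ ({1, 2} : Finset ℕ))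
    (hproper : ∀ u v, G.Adj u v → gapEdgeColor G f u ≠ gapEdgeColor G f v) :
    ((∀ v ∈ X, gapEdgeColor G f v = 1) ∧ (∀ v ∉ X, gapEdgeColor G f v = 0)) ∨
    ((∀ v ∈ X, gapEdgeColor G f v = 0) ∧ (∀ v ∉ X, gapEdgeColor G f v = 1)) := by
  set c := gapEdgeColor G f with hc
  have hle : ∀ v, c v ≤ 1 := gapEdgeColor_le_one G hdeg f hf
  -- step: Q u ↔ Q v for adjacent u v, where Q v := (c v = 1 ↔ v ∈ X)
  have step : ∀ u v, G.Adj u v → ((c u = 1 ↔ u ∈ X) ↔ (c v = 1 ↔ v ∈ X)) := by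
    intro u v h
    have h1 := hproper u v h
    have h2 := hbip u v h
    have hu := hle u
    have hv := hle v
    have : c u = 1 ↔ ¬ (c v = 1) := by omega
    tauto
  have key : ∀ u v : V, ((c u = 1 ↔ u ∈ X) ↔ (c v = 1 ↔ v ∈ X)) := by
    intro u v
    obtain ⟨w⟩ := hconn.preconnected u v
    induction w with
    | nil => rfl
    | cons h p ih => exact (step _ _ h).trans ih
  obtain ⟨v0⟩ := hconn.nonempty
  by_cases hQ : c v0 = 1 ↔ v0 ∈ X
  · left
    constructor
    · intro v hv
      exact ((key v v0).mpr hQ).mpr hv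
    · intro v hv
      have h3 := (key v v0).mpr hQ
      have h4 : c v ≠ 1 := fun h => hv (h3.mp h)
      have := hle v
      omega
  · right
    constructor
    · intro v hv
      have h2 : ¬ (c v = 1 ↔ v ∈ X) := fun h => hQ ((key v0 v).mpr h)
      have h4 : c v ≠ 1 := fun h => h2 (by tauto)
      have := hle v
      omega
    · intro v hv
      have h2 : ¬ (c v = 1 ↔ v ∈ X) := fun h => hQ ((key v0 v).mpr h)
      by_contra h
      exact h2 (by tauto)
end

section
/- A graph G has a vertex-labeling by degree from {1, 2} if and only if a certain 2-SAT formula Φ_G is satisfiable, where Φ_G has a variable x_v for each vertex v, and for every edge uv: if d(u) = d(v), Φ_G contains the clauses (x_u ∨ x_v) and (¬x_u ∨ ¬x_v); if d(u) = 2d(v), it contains (x_u ∨ ¬x_v); and if 2d(u) = d(v), it contains (¬x_u ∨ x_v); and no other clauses. -/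
/-- A graph `G` has a vertex-labeling by degree from `{1, 2}` (a labeling `f` such
that `c v = f v * deg v` is a proper vertex coloring) iff the associated 2-SAT
formula is satisfiable: there is an assignment `Γ` of truth values to the vertices
such that for every edge `uv`, if `deg u = deg v` then the clauses `(x_u ∨ x_v)` and
`(¬x_u ∨ ¬x_v)` hold, if `deg u = 2·deg v` then `(x_u ∨ ¬x_v)` holds, and if
`2·deg u = deg v` then `(¬x_u ∨ x_v)` holds. -/
theorem vertex_labeling_by_degree_iff_two_sat
    {V : Type*} [Fintype V] (G : SimpleGraph V) [DecidableRel G.Adj] :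
    (∃ f : V → ℕ, (∀ v, f v ∈ ({1, 2} : Finset ℕ)) ∧
      ∀ u v, G.Adj u v → f u * G.degree u ≠ f v * G.degree v) ↔
    (∃ Γ : V → Prop, ∀ u v, G.Adj u v →
      (G.degree u = G.degree v → (Γ u ∨ Γ v) ∧ (¬Γ u ∨ ¬Γ v)) ∧
      (G.degree u = 2 * G.degree v → (Γ u ∨ ¬Γ v)) ∧
      (2 * G.degree u = G.degree v → (¬Γ u ∨ Γ v))) := by
  constructor
  · rintro ⟨f, hf, hproper⟩
    refine ⟨fun v => f v = 2, fun u v huv => ?_⟩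
    have hu := hf u
    have hv := hf v
    simp only [Finset.mem_insert, Finset.mem_singleton] at hu hv
    have hne := hproper u v huv
    have hdu : 0 < G.degree u := (G.degree_pos_iff_exists_adj u).mpr ⟨v, huv⟩
    have hdv : 0 < G.degree v := (G.degree_pos_iff_exists_adj v).mpr ⟨u, huv.symm⟩
    refine ⟨fun h => ?_, fun h => ?_, fun h => ?_⟩ <;>
      rcases hu with hu | hu <;> rcases hv with hv | hv <;>
      simp_all
  · rintro ⟨Γ, hΓ⟩
    classical
    refine ⟨fun v => if Γ v then 2 else 1, fun v => by
      simp only [Finset.mem_insert, Finset.mem_singleton]; split <;> simp,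
      fun u v huv heq => ?_⟩
    have h := hΓ u v huv
    have hdu : 0 < G.degree u := (G.degree_pos_iff_exists_adj u).mpr ⟨v, huv⟩
    have hdv : 0 < G.degree v := (G.degree_pos_iff_exists_adj v).mpr ⟨u, huv.symm⟩
    obtain ⟨h1, h2, h3⟩ := h
    by_cases hu : Γ u <;> by_cases hv : Γ v <;> simp_all
end
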